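/- arXiv:1601.02164 — 3 statements merged into one kernel-verified Lean document; each statement's English description precedes it below -/
import Mathlib

section
/- Let H be a separable complex Hilbert space, n a positive integer (n < ∞), and let S and T be Toeplitz families of size n on H. Then S and T are B(H)-quasifree equivalent if and only if S and T have the same multiplicity. -/
set_option linter.unusedSectionVars false
set_option maxHeartbeats 1000000

variable {H : Type*} [NormedAddCommGroup H] [InnerProductSpace ℂ H] [CompleteSpace H]

/-- A Toeplitz family of size `n` on `H`: `n` isometries with pairwise orthogonal ranges. -/
def IsToeplitzFamily {n : ℕ} (S : Fin n → (H →L[ℂ] H)) : Prop :=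
  ∀ i j, star (S i) * S j = if i = j then (1 : H →L[ℂ] H) else 0

/-- `U` is a unitary `n × n` matrix with entries in `A ⊆ B(H)`. -/
def IsUnitaryMatrixIn {n : ℕ} (A : Set (H →L[ℂ] H)) (U : Fin n → Fin n → (H →L[ℂ] H)) : Prop :=
  (∀ i j, U i j ∈ A) ∧
  (∀ j k, ∑ i, star (U i j) * U i k = if j = k then (1 : H →L[ℂ] H) else 0) ∧
  (∀ j k, ∑ i, U j i * star (U k i) = if j = k then (1 : H →L[ℂ] H) else 0)

/-- `W` is an `A`-fixing unitary: `W` is unitary and `W A W* = A`. -/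
def IsFixingUnitary (A : Set (H →L[ℂ] H)) (W : H →L[ℂ] H) : Prop :=
  star W * W = 1 ∧ W * star W = 1 ∧ (fun a => W * a * star W) '' A = A

/-- `A`-quasifree equivalence: `Sᵢ = Σⱼ W Tⱼ W* u_{ji}` for some `A`-fixing unitary `W`
and unitary matrix `U = [u_{jk}]` with entries in `A`. -/
def QuasifreeEquiv {n : ℕ} (A : Set (H →L[ℂ] H)) (S T : Fin n → (H →L[ℂ] H)) : Prop :=
  ∃ W : H →L[ℂ] H, IsFixingUnitary A W ∧
    ∃ U : Fin n → Fin n → (H →L[ℂ] H), IsUnitaryMatrixIn A U ∧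
      ∀ i, S i = ∑ j, W * T j * star W * U j i

/-- The multiplicity of a Toeplitz family: the Hilbert space dimension of the orthogonal
complement of the (closed) linear span of the ranges of the `Sᵢ`. -/
noncomputable def toeplitzMultiplicity {n : ℕ} (S : Fin n → (H →L[ℂ] H)) : Cardinal :=
  Module.rank ℂ ↥((⨆ i, LinearMap.range ((S i : H →ₗ[ℂ] H)))ᗮ)

local notation "⟪" x ", " y "⟫" => @inner ℂ _ _ x y


theorem my_orthonormal_countable {K : Type*} [NormedAddCommGroup K] [InnerProductSpace ℂ K]
    [TopologicalSpace.SeparableSpace K] {ι : Type*} {v : ι → K} (hv : Orthonormal ℂ v) :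
    Countable ι := by
  refine Pairwise.countable_of_isOpen_disjoint (s := fun i => Metric.ball (v i) (1/2)) ?_
    (fun i => Metric.isOpen_ball) (fun i => Metric.nonempty_ball.2 (by norm_num))
  intro i j hij
  refine Metric.ball_disjoint_ball ?_
  have h0 : ⟪v i, v j⟫ = 0 := hv.2 hij
  have hsq : ‖v i - v j‖ ^ 2 = 2 := by
    rw [@norm_sub_sq ℂ]
    simp [hv.1, h0]
    norm_num
  have h1 : (1:ℝ) ≤ ‖v i - v j‖ := by nlinarith [norm_nonneg (v i - v j)]
  rw [dist_eq_norm]; linarith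

universe u
theorem my_nonempty_isometryEquiv_of_rank_eq {K L : Type u}
    [NormedAddCommGroup K] [InnerProductSpace ℂ K] [CompleteSpace K]
    [TopologicalSpace.SeparableSpace K]
    [NormedAddCommGroup L] [InnerProductSpace ℂ L] [CompleteSpace L]
    [TopologicalSpace.SeparableSpace L]
    (h : Module.rank ℂ K = Module.rank ℂ L) : Nonempty (K ≃ₗᵢ[ℂ] L) := by
  obtain ⟨w, b, -⟩ := exists_hilbertBasis ℂ K
  obtain ⟨w', b', -⟩ := exists_hilbertBasis ℂ L
  have hw : Countable w := my_orthonormal_countable b.orthonormal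
  have hw' : Countable w' := my_orthonormal_countable b'.orthonormal
  have hcard : Nonempty (↥w ≃ ↥w') := by
    apply Cardinal.eq.1
    rcases finite_or_infinite ↥w with hfin | hinf <;>
      rcases finite_or_infinite ↥w' with hfin' | hinf'
    · haveI : Fintype ↥w := Fintype.ofFinite _
      haveI : Fintype ↥w' := Fintype.ofFinite _
      rw [b.toOrthonormalBasis.toBasis.mk_eq_rank'', b'.toOrthonormalBasis.toBasis.mk_eq_rank'', h]
    · exfalso
      haveI : Fintype ↥w := Fintype.ofFinite _
      have h1 : Cardinal.mk ↥w' ≤ Module.rank ℂ L :=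
        b'.orthonormal.linearIndependent.cardinal_le_rank
      rw [← h, ← b.toOrthonormalBasis.toBasis.mk_eq_rank''] at h1
      exact (Cardinal.aleph0_le_mk ↥w').not_gt (h1.trans_lt (Cardinal.mk_lt_aleph0_iff.2 hfin))
    · exfalso
      haveI : Fintype ↥w' := Fintype.ofFinite _
      have h1 : Cardinal.mk ↥w ≤ Module.rank ℂ K :=
        b.orthonormal.linearIndependent.cardinal_le_rank
      rw [h, ← b'.toOrthonormalBasis.toBasis.mk_eq_rank''] at h1
      exact (Cardinal.aleph0_le_mk ↥w).not_gt (h1.trans_lt (Cardinal.mk_lt_aleph0_iff.2 hfin'))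
    · rw [Cardinal.mk_eq_aleph0, Cardinal.mk_eq_aleph0]
  obtain ⟨e⟩ := hcard
  have hon : Orthonormal ℂ (⇑b' ∘ (⇑e : ↥w → ↥w')) := b'.orthonormal.comp _ e.injective
  have hsp : ⊤ ≤ (Submodule.span ℂ (Set.range (⇑b' ∘ ⇑e))).topologicalClosure := by
    rw [Set.range_comp, e.surjective.range_eq, Set.image_univ]
    exact b'.dense_span.ge
  exact ⟨b.repr.trans (HilbertBasis.mk hon hsp).repr.symm⟩


noncomputable def tproj {n : ℕ} (S : Fin n → (H →L[ℂ] H)) : H →L[ℂ] H :=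
  ∑ i, S i * star (S i)

theorem star_tproj {n : ℕ} (S : Fin n → (H →L[ℂ] H)) : star (tproj S) = tproj S := by
  simp [tproj, star_sum, star_mul, star_star]

theorem tproj_mul_right {n : ℕ} {S : Fin n → (H →L[ℂ] H)} (hS : IsToeplitzFamily S) (j : Fin n) :
    tproj S * S j = S j := by
  rw [tproj, Finset.sum_mul]
  have h : ∀ i, S i * star (S i) * S j = if i = j then S j else 0 := by
    intro i
    rw [mul_assoc, hS i j]
    split
    · rename_i h'; subst h'; simp
    · simp
  simp [h]

theorem sum_sandwich {n : ℕ} (A B : H →L[ℂ] H) (F G : Fin n → (H →L[ℂ] H)) :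
    ∑ i, (A * F i) * (G i * B) = A * (∑ i, F i * G i) * B := by
  simp [Finset.mul_sum, Finset.sum_mul, mul_assoc]

theorem sup_range_eq {n : ℕ} {S : Fin n → (H →L[ℂ] H)} (hS : IsToeplitzFamily S) :
    (⨆ i, LinearMap.range ((S i : H →ₗ[ℂ] H))) = LinearMap.range ((tproj S : H →ₗ[ℂ] H)) := by
  apply le_antisymm
  · refine iSup_le fun j => ?_
    rintro y ⟨x, rfl⟩
    refine ⟨S j x, ?_⟩
    have := congrFun (congrArg DFunLike.coe (tproj_mul_right hS j)) x
    simpa using this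
  · rintro y ⟨x, rfl⟩
    have hx : (tproj S : H →ₗ[ℂ] H) x = ∑ i, S i ((star (S i)) x) := by
      simp [tproj]
    rw [hx]
    exact Submodule.sum_mem _ fun i _ => Submodule.mem_iSup_of_mem i ⟨_, rfl⟩

theorem orth_range_eq_ker {P : H →L[ℂ] H} (hP : star P = P) :
    (LinearMap.range ((P : H →ₗ[ℂ] H)))ᗮ = LinearMap.ker ((P : H →ₗ[ℂ] H)) := by
  have hadj : ContinuousLinearMap.adjoint P = P := by
    rw [← ContinuousLinearMap.star_eq_adjoint, hP]
  have key : ∀ x y : H, ⟪P y, x⟫ = ⟪y, P x⟫ := by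
    intro x y
    conv_lhs => rw [← hadj]
    rw [ContinuousLinearMap.adjoint_inner_left]
  ext x
  simp only [Submodule.mem_orthogonal, LinearMap.mem_range, LinearMap.mem_ker,
    ContinuousLinearMap.coe_coe, forall_exists_index]
  constructor
  · intro h
    have h3 : ⟪P (P x), x⟫ = 0 := h _ (P x) rfl
    rw [key] at h3
    exact inner_self_eq_zero.mp h3
  · rintro h u y rfl
    rw [key, h, inner_zero_right]

theorem mult_eq_rank_ker {n : ℕ} {S : Fin n → (H →L[ℂ] H)} (hS : IsToeplitzFamily S) :
    toeplitzMultiplicity S = Module.rank ℂ ↥(LinearMap.ker ((tproj S : H →ₗ[ℂ] H))) := by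
  rw [toeplitzMultiplicity, sup_range_eq hS, orth_range_eq_ker (star_tproj S)]

theorem tproj_conj {n : ℕ} {S T : Fin n → (H →L[ℂ] H)} {W : H →L[ℂ] H}
    {U : Fin n → Fin n → (H →L[ℂ] H)}
    (hW : star W * W = 1)
    (hU : ∀ j k, ∑ i, U j i * star (U k i) = if j = k then (1 : H →L[ℂ] H) else 0)
    (hrel : ∀ i, S i = ∑ j, W * T j * star W * U j i) :
    tproj S = W * tproj T * star W := by
  have hW' : ∀ x : H →L[ℂ] H, star W * (W * x) = x := fun x => by
    rw [← mul_assoc, hW, one_mul]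
  have hstar : ∀ i, star (S i) = ∑ k, star (U k i) * (W * star (T k) * star W) := by
    intro i
    rw [hrel i, star_sum]
    refine Finset.sum_congr rfl fun k _ => ?_
    simp [star_mul, mul_assoc]
  calc tproj S
      = ∑ i, (∑ j, W * T j * star W * U j i) * (∑ k, star (U k i) * (W * star (T k) * star W)) :=
        Finset.sum_congr rfl fun i _ => by rw [← hrel i, ← hstar i]
    _ = ∑ i, ∑ j, ∑ k, (W * T j * star W) * (U j i * star (U k i)) * (W * star (T k) * star W) := by
        refine Finset.sum_congr rfl fun i _ => ?_
        rw [Finset.sum_mul_sum]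
        exact Finset.sum_congr rfl fun j _ => Finset.sum_congr rfl fun k _ => by
          simp [mul_assoc]
    _ = ∑ j, ∑ k, (W * T j * star W) * (∑ i, U j i * star (U k i)) * (W * star (T k) * star W) := by
        rw [Finset.sum_comm]
        refine Finset.sum_congr rfl fun j _ => ?_
        rw [Finset.sum_comm]
        refine Finset.sum_congr rfl fun k _ => ?_
        simp [Finset.mul_sum, Finset.sum_mul]
    _ = ∑ j, (W * T j * star W) * (W * star (T j) * star W) := by
        simp only [hU]
        refine Finset.sum_congr rfl fun j _ => ?_
        simp [mul_ite, ite_mul, Finset.sum_ite_eq]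
    _ = W * tproj T * star W := by
        rw [tproj]
        simp only [Finset.mul_sum, Finset.sum_mul]
        refine Finset.sum_congr rfl fun j _ => ?_
        simp [mul_assoc, hW']

theorem rank_ker_conj {P W : H →L[ℂ] H} (hW1 : star W * W = 1) (hW2 : W * star W = 1) :
    Module.rank ℂ ↥(LinearMap.ker (((W * P * star W : H →L[ℂ] H)) : H →ₗ[ℂ] H))
      = Module.rank ℂ ↥(LinearMap.ker ((P : H →ₗ[ℂ] H))) := by
  have h1 : ∀ x : H, star W (W x) = x := fun x => by
    have := congrFun (congrArg DFunLike.coe hW1) x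
    simpa using this
  have h2 : ∀ x : H, W (star W x) = x := fun x => by
    have := congrFun (congrArg DFunLike.coe hW2) x
    simpa using this
  let e : H ≃ₗ[ℂ] H := LinearEquiv.ofLinear (W : H →ₗ[ℂ] H) ((star W : H →L[ℂ] H) : H →ₗ[ℂ] H)
    (by ext x; exact h2 x) (by ext x; exact h1 x)
  have hker : LinearMap.ker (((W * P * star W : H →L[ℂ] H)) : H →ₗ[ℂ] H)
      = Submodule.map (e : H →ₗ[ℂ] H) (LinearMap.ker ((P : H →ₗ[ℂ] H))) := by
    ext x
    simp only [LinearMap.mem_ker, Submodule.mem_map, ContinuousLinearMap.coe_coe,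
      ContinuousLinearMap.mul_apply]
    constructor
    · intro hx
      refine ⟨star W x, ?_, h2 x⟩
      show P (star W x) = 0
      have : star W (W (P (star W x))) = star W 0 := by rw [← hx]
      rw [h1] at this
      simpa using this
    · rintro ⟨y, hy, rfl⟩
      have hy' : P y = 0 := hy
      show W (P (star W (e y))) = 0
      have : star W (e y) = y := h1 y
      rw [this, hy', map_zero]
  rw [hker]
  exact ((LinearMap.ker ((P : H →ₗ[ℂ] H))).equivMapOfInjective _ e.injective).rank_eq.symm

theorem range_eq_ker_one_sub {P : H →L[ℂ] H} (hP2 : P * P = P) :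
    LinearMap.range ((P : H →ₗ[ℂ] H)) = LinearMap.ker (((1 - P : H →L[ℂ] H)) : H →ₗ[ℂ] H) := by
  have hP2' : ∀ x : H, P (P x) = P x := fun x => by
    have := congrFun (congrArg DFunLike.coe hP2) x; simpa using this
  ext x
  simp only [LinearMap.mem_range, LinearMap.mem_ker, ContinuousLinearMap.coe_coe,
    ContinuousLinearMap.sub_apply, ContinuousLinearMap.one_apply, sub_eq_zero]
  constructor
  · rintro ⟨y, rfl⟩; exact (hP2' y).symm
  · intro hx; exact ⟨x, hx.symm⟩

theorem mem_ker_one_sub_iff {P : H →L[ℂ] H} (x : H) :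
    x ∈ LinearMap.ker (((1 - P : H →L[ℂ] H)) : H →ₗ[ℂ] H) ↔ P x = x := by
  simp only [LinearMap.mem_ker, ContinuousLinearMap.coe_coe, ContinuousLinearMap.sub_apply,
    ContinuousLinearMap.one_apply, sub_eq_zero]
  exact eq_comm

theorem mem_ker_iff {P : H →L[ℂ] H} (x : H) :
    x ∈ LinearMap.ker ((P : H →ₗ[ℂ] H)) ↔ P x = 0 := by
  simp [LinearMap.mem_ker]

theorem exists_conj_unitary [TopologicalSpace.SeparableSpace H] {P Q : H →L[ℂ] H}
    (hP : star P = P) (hP2 : P * P = P) (hQ : star Q = Q) (hQ2 : Q * Q = Q)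
    (hK : Module.rank ℂ ↥(LinearMap.ker ((P : H →ₗ[ℂ] H)))
        = Module.rank ℂ ↥(LinearMap.ker ((Q : H →ₗ[ℂ] H))))
    (hN : Module.rank ℂ ↥(LinearMap.ker (((1 - P : H →L[ℂ] H)) : H →ₗ[ℂ] H))
        = Module.rank ℂ ↥(LinearMap.ker (((1 - Q : H →L[ℂ] H)) : H →ₗ[ℂ] H))) :
    ∃ W : H →L[ℂ] H, star W * W = 1 ∧ W * star W = 1 ∧ W * Q * star W = P := by
  set KP : Submodule ℂ H := LinearMap.ker ((P : H →ₗ[ℂ] H)) with hKPdef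
  set NP : Submodule ℂ H := LinearMap.ker (((1 - P : H →L[ℂ] H)) : H →ₗ[ℂ] H) with hNPdef
  set KQ : Submodule ℂ H := LinearMap.ker ((Q : H →ₗ[ℂ] H)) with hKQdef
  set NQ : Submodule ℂ H := LinearMap.ker (((1 - Q : H →L[ℂ] H)) : H →ₗ[ℂ] H) with hNQdef
  haveI : CompleteSpace ↥NP := inferInstanceAs (CompleteSpace ((1 - P : H →L[ℂ] H)).ker)
  haveI : CompleteSpace ↥NQ := inferInstanceAs (CompleteSpace ((1 - Q : H →L[ℂ] H)).ker)
  haveI : CompleteSpace ↥KP := inferInstanceAs (CompleteSpace P.ker)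
  haveI : CompleteSpace ↥KQ := inferInstanceAs (CompleteSpace Q.ker)
  haveI : SecondCountableTopology H :=
    UniformSpace.secondCountable_of_separable H
  have orthNP : NPᗮ = KP := by
    rw [hNPdef, hKPdef, ← range_eq_ker_one_sub hP2]; exact orth_range_eq_ker hP
  have orthNQ : NQᗮ = KQ := by
    rw [hNQdef, hKQdef, ← range_eq_ker_one_sub hQ2]; exact orth_range_eq_ker hQ
  have orthKP : KPᗮ = NP := by rw [← orthNP]; exact Submodule.orthogonal_orthogonal NP
  have orthKQ : KQᗮ = NQ := by rw [← orthNQ]; exact Submodule.orthogonal_orthogonal NQ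
  obtain ⟨g⟩ := my_nonempty_isometryEquiv_of_rank_eq (K := ↥NQ) (L := ↥NP) hN.symm
  obtain ⟨f⟩ := my_nonempty_isometryEquiv_of_rank_eq (K := ↥KQ) (L := ↥KP) hK.symm
  set W : H →L[ℂ] H :=
    NP.subtypeL.comp (g.toLinearIsometry.toContinuousLinearMap.comp NQ.orthogonalProjectionOnto) +
    KP.subtypeL.comp (f.toLinearIsometry.toContinuousLinearMap.comp KQ.orthogonalProjectionOnto)
    with hWdef
  have hWn : ∀ (m : H) (hm : m ∈ NQ), W m = ↑(g ⟨m, hm⟩) := by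
    intro m hm
    have hm' : m ∈ KQᗮ := by rw [orthKQ]; exact hm
    have h1 : NQ.orthogonalProjectionOnto m = ⟨m, hm⟩ :=
      Submodule.orthogonalProjectionOnto_mem_subspace_eq_self (⟨m, hm⟩ : NQ)
    have h2 : KQ.orthogonalProjectionOnto m = 0 :=
      Submodule.orthogonalProjectionOnto_apply_of_mem_orthogonal hm'
    simp [hWdef, h1, h2]
  have hWk : ∀ (k : H) (hk : k ∈ KQ), W k = ↑(f ⟨k, hk⟩) := by
    intro k hk
    have hk' : k ∈ NQᗮ := by rw [orthNQ]; exact hk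
    have h1 : KQ.orthogonalProjectionOnto k = ⟨k, hk⟩ :=
      Submodule.orthogonalProjectionOnto_mem_subspace_eq_self (⟨k, hk⟩ : KQ)
    have h2 : NQ.orthogonalProjectionOnto k = 0 :=
      Submodule.orthogonalProjectionOnto_apply_of_mem_orthogonal hk'
    simp [hWdef, h1, h2]
  have hdecQ : ∀ x : H, ∃ m ∈ NQ, ∃ k ∈ KQ, x = m + k := by
    intro x
    obtain ⟨m, hm, k, hk, h⟩ := NQ.exists_add_mem_mem_orthogonal x
    exact ⟨m, hm, k, by rwa [orthNQ] at hk, h⟩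
  have crossP : ∀ (a : NP) (b : KP), ⟪(a : H), (b : H)⟫ = 0 := by
    intro a b
    refine Submodule.inner_right_of_mem_orthogonal a.2 ?_
    rw [orthNP]; exact b.2
  have crossQ : ∀ (m k : H), m ∈ NQ → k ∈ KQ → ⟪m, k⟫ = 0 := by
    intro m k hm hk
    refine Submodule.inner_right_of_mem_orthogonal hm ?_
    rw [orthNQ]; exact hk
  have hinner : ∀ x y : H, ⟪W x, W y⟫ = ⟪x, y⟫ := by
    intro x y
    obtain ⟨m, hm, k, hk, rfl⟩ := hdecQ x
    obtain ⟨m', hm', k', hk', rfl⟩ := hdecQ y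
    have e1 : W (m + k) = ↑(g ⟨m, hm⟩) + ↑(f ⟨k, hk⟩) := by
      rw [map_add, hWn m hm, hWk k hk]
    have e2 : W (m' + k') = ↑(g ⟨m', hm'⟩) + ↑(f ⟨k', hk'⟩) := by
      rw [map_add, hWn m' hm', hWk k' hk']
    rw [e1, e2]
    have hgg : ⟪(↑(g ⟨m, hm⟩) : H), (↑(g ⟨m', hm'⟩) : H)⟫ = ⟪m, m'⟫ := by
      rw [← Submodule.coe_inner, g.inner_map_map, Submodule.coe_inner]
    have hff : ⟪(↑(f ⟨k, hk⟩) : H), (↑(f ⟨k', hk'⟩) : H)⟫ = ⟪k, k'⟫ := by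
      rw [← Submodule.coe_inner, f.inner_map_map, Submodule.coe_inner]
    have c1 : ⟪(↑(g ⟨m, hm⟩) : H), (↑(f ⟨k', hk'⟩) : H)⟫ = 0 := crossP _ _
    have c2 : ⟪(↑(f ⟨k, hk⟩) : H), (↑(g ⟨m', hm'⟩) : H)⟫ = 0 := by
      rw [← inner_conj_symm, crossP, map_zero]
    have d1 : ⟪m, k'⟫ = 0 := crossQ _ _ hm hk'
    have d2 : ⟪k, m'⟫ = 0 := by rw [← inner_conj_symm, crossQ _ _ hm' hk, map_zero]
    simp only [inner_add_left, inner_add_right, hgg, hff, c1, c2, d1, d2]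
  have hW1 : star W * W = 1 := by
    ext x
    apply ext_inner_right ℂ
    intro v
    have : star W = ContinuousLinearMap.adjoint W := ContinuousLinearMap.star_eq_adjoint W
    rw [ContinuousLinearMap.mul_apply, this, ContinuousLinearMap.adjoint_inner_left,
      hinner]
    simp
  have hsurj : Function.Surjective W := by
    intro y
    obtain ⟨a, ha, b, hb', hy⟩ := NP.exists_add_mem_mem_orthogonal y
    have hb : b ∈ KP := by rwa [orthNP] at hb'
    refine ⟨↑(g.symm ⟨a, ha⟩) + ↑(f.symm ⟨b, hb⟩), ?_⟩
    rw [map_add, hWn _ (g.symm ⟨a, ha⟩).2, hWk _ (f.symm ⟨b, hb⟩).2]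
    simp only [Subtype.coe_eta, LinearIsometryEquiv.apply_symm_apply]
    exact hy.symm
  have hW2 : W * star W = 1 := by
    ext y
    obtain ⟨x, rfl⟩ := hsurj y
    have : (W * (star W * W)) x = W x := by rw [hW1, mul_one]
    calc (W * star W) (W x) = (W * (star W * W)) x := by
          simp [ContinuousLinearMap.mul_apply]
      _ = W x := this
      _ = (1 : H →L[ℂ] H) (W x) := rfl
  have hPW : P * W = W * Q := by
    ext x
    obtain ⟨m, hm, k, hk, rfl⟩ := hdecQ x
    have hQm : Q m = m := (mem_ker_one_sub_iff m).1 hm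
    have hQk : Q k = 0 := (mem_ker_iff k).1 hk
    have hPg : P ↑(g ⟨m, hm⟩) = ↑(g ⟨m, hm⟩) := (mem_ker_one_sub_iff _).1 (g ⟨m, hm⟩).2
    have hPf : P ↑(f ⟨k, hk⟩) = 0 := (mem_ker_iff _).1 (f ⟨k, hk⟩).2
    calc (P * W) (m + k) = P (W m + W k) := by simp [ContinuousLinearMap.mul_apply]
      _ = P ↑(g ⟨m, hm⟩) + P ↑(f ⟨k, hk⟩) := by rw [hWn m hm, hWk k hk, map_add]
      _ = ↑(g ⟨m, hm⟩) := by rw [hPg, hPf, add_zero]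
      _ = W m := (hWn m hm).symm
      _ = W (Q (m + k)) := by rw [map_add, hQm, hQk, add_zero]
      _ = (W * Q) (m + k) := rfl
  refine ⟨W, hW1, hW2, ?_⟩
  rw [← hPW, mul_assoc, hW2, mul_one]

theorem tproj_idem {n : ℕ} {S : Fin n → (H →L[ℂ] H)} (hS : IsToeplitzFamily S) :
    tproj S * tproj S = tproj S := by
  have h2 : ∀ i, star (S i) * tproj S = star (S i) := by
    intro i
    have h := congrArg star (tproj_mul_right hS i)
    rwa [star_mul, star_tproj] at h
  rw [tproj, Finset.sum_mul]
  refine Finset.sum_congr rfl fun i _ => ?_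
  rw [mul_assoc]
  rw [show (∑ j, S j * star (S j)) = tproj S from rfl, h2 i]


/-- On a separable Hilbert space, two Toeplitz families of size `n ≥ 1` are
`B(H)`-quasifree equivalent iff they have the same multiplicity. -/
theorem quasifreeEquiv_iff_multiplicity_eq [TopologicalSpace.SeparableSpace H]
    (n : ℕ) (hn : 0 < n)
    (S T : Fin n → (H →L[ℂ] H)) (hS : IsToeplitzFamily S) (hT : IsToeplitzFamily T) :
    QuasifreeEquiv (Set.univ : Set (H →L[ℂ] H)) S T ↔
      toeplitzMultiplicity S = toeplitzMultiplicity T := by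
  constructor
  · rintro ⟨W, ⟨hW1, hW2, -⟩, U, ⟨-, hUcol, hUrow⟩, hrel⟩
    rw [mult_eq_rank_ker hS, mult_eq_rank_ker hT, tproj_conj hW1 hUrow hrel]
    exact rank_ker_conj hW1 hW2
  · intro h
    rw [mult_eq_rank_ker hS, mult_eq_rank_ker hT] at h
    have hNrank : ∀ {S' : Fin n → (H →L[ℂ] H)}, IsToeplitzFamily S' →
        Module.rank ℂ ↥(LinearMap.ker (((1 - tproj S' : H →L[ℂ] H)) : H →ₗ[ℂ] H))
          = Module.rank ℂ H := by
      intro S' hS'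
      refine le_antisymm (Submodule.rank_le _) ?_
      have hmem : ∀ x : H, (S' ⟨0, hn⟩ : H →ₗ[ℂ] H) x ∈
          LinearMap.ker (((1 - tproj S' : H →L[ℂ] H)) : H →ₗ[ℂ] H) := by
        intro x
        rw [mem_ker_one_sub_iff]
        have := congrFun (congrArg DFunLike.coe (tproj_mul_right hS' ⟨0, hn⟩)) x
        simpa using this
      have hinj : Function.Injective
          (LinearMap.codRestrict _ ((S' ⟨0, hn⟩ : H →ₗ[ℂ] H)) hmem) := by
        intro x y hxy
        have hc : S' ⟨0, hn⟩ x = S' ⟨0, hn⟩ y := congrArg Subtype.val hxy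
        have h00 := hS' ⟨0, hn⟩ ⟨0, hn⟩
        rw [if_pos rfl] at h00
        have hx := congrFun (congrArg DFunLike.coe h00) x
        have hy := congrFun (congrArg DFunLike.coe h00) y
        simp only [ContinuousLinearMap.mul_apply, ContinuousLinearMap.one_apply] at hx hy
        rw [← hx, ← hy, hc]
      exact LinearMap.rank_le_of_injective _ hinj
    have hN := (hNrank hS).trans (hNrank hT).symm
    obtain ⟨W, hW1, hW2, hWQW⟩ := exists_conj_unitary (star_tproj S) (tproj_idem hS)
      (star_tproj T) (tproj_idem hT) h hN
    have h1' : ∀ x : H →L[ℂ] H, star W * (W * x) = x := fun x => by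
      rw [← mul_assoc, hW1, one_mul]
    set R : Fin n → (H →L[ℂ] H) := fun j => W * T j * star W with hRdef
    have hR : IsToeplitzFamily R := by
      intro i j
      have e : star (R i) * R j = W * (star (T i) * T j) * star W := by
        simp [hRdef, star_mul, star_star, mul_assoc, h1']
      rw [e, hT i j]
      split
      · rw [mul_one, hW2]
      · rw [mul_zero, zero_mul]
    have hprojR : tproj R = tproj S := by
      have e : tproj R = W * tproj T * star W := by
        rw [tproj, tproj, Finset.mul_sum, Finset.sum_mul]
        refine Finset.sum_congr rfl fun j _ => ?_
        simp [hRdef, star_mul, star_star, mul_assoc, h1']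
      rw [e, hWQW]
    refine ⟨W, ⟨hW1, hW2, ?_⟩, fun j k => star (R j) * S k,
      ⟨fun _ _ => Set.mem_univ _, ?_, ?_⟩, ?_⟩
    · rw [Set.image_univ, Set.range_eq_univ]
      intro b
      refine ⟨star W * b * W, ?_⟩
      simp only [← mul_assoc]
      rw [hW2, one_mul, mul_assoc, hW2, mul_one]
    · intro j k
      calc ∑ i, star (star (R i) * S j) * (star (R i) * S k)
          = ∑ i, (star (S j) * R i) * (star (R i) * S k) :=
            Finset.sum_congr rfl fun i _ => by rw [star_mul, star_star]
        _ = star (S j) * (∑ i, R i * star (R i)) * S k := sum_sandwich _ _ _ _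
        _ = star (S j) * (tproj S * S k) := by
            rw [show (∑ i, R i * star (R i)) = tproj R from rfl, hprojR, mul_assoc]
        _ = star (S j) * S k := by rw [tproj_mul_right hS]
        _ = _ := hS j k
    · intro j k
      calc ∑ i, (star (R j) * S i) * star (star (R k) * S i)
          = ∑ i, (star (R j) * S i) * (star (S i) * R k) :=
            Finset.sum_congr rfl fun i _ => by
              rw [star_mul (star (R k)) (S i), star_star]
        _ = star (R j) * (∑ i, S i * star (S i)) * R k := sum_sandwich _ _ _ _
        _ = star (R j) * (tproj R * R k) := by
            rw [show (∑ i, S i * star (S i)) = tproj S from rfl, ← hprojR, mul_assoc]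
        _ = star (R j) * R k := by rw [tproj_mul_right hR]
        _ = _ := hR j k
    · intro i
      have e : ∑ j, R j * (star (R j) * S i) = tproj R * S i := by
        rw [tproj, Finset.sum_mul]
        exact Finset.sum_congr rfl fun j _ => (mul_assoc _ _ _).symm
      calc S i = tproj S * S i := (tproj_mul_right hS i).symm
        _ = tproj R * S i := by rw [hprojR]
        _ = ∑ j, R j * (star (R j) * S i) := e.symm
        _ = ∑ j, W * T j * star W * (star (R j) * S i) := by
            exact Finset.sum_congr rfl fun j _ => by rw [hRdef]
end

section
/- Let H be a complex Hilbert space, A any unital C*-subalgebra of B(H), and let S and T be Toeplitz families of size n on H. If S and T are A-quasifree equivalent, then S and T have the same multiplicity. -/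
open scoped ComplexInnerProductSpace


variable {H : Type*} [NormedAddCommGroup H] [InnerProductSpace ℂ H] [CompleteSpace H]

/-- For any unital C*-subalgebra `A ⊆ B(H)`, `A`-quasifree equivalent
Toeplitz families have the same multiplicity. -/
theorem quasifreeEquiv_multiplicity_eq (A : StarSubalgebra ℂ (H →L[ℂ] H))
    (hA : IsClosed (A : Set (H →L[ℂ] H))) (n : ℕ)
    (S T : Fin n → (H →L[ℂ] H)) (hS : IsToeplitzFamily S) (hT : IsToeplitzFamily T)
    (h : QuasifreeEquiv (A : Set (H →L[ℂ] H)) S T) :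
    toeplitzMultiplicity S = toeplitzMultiplicity T := by
  obtain ⟨W, ⟨hW1, hW2, -⟩, U, ⟨-, -, hUr⟩, hST⟩ := h
  have hWW : ∀ x : H, star W (W x) = x := fun x => by
    have := congrArg (fun f : H →L[ℂ] H => f x) hW1
    simpa [ContinuousLinearMap.mul_apply] using this
  have hWW' : ∀ x : H, W (star W x) = x := fun x => by
    have := congrArg (fun f : H →L[ℂ] H => f x) hW2
    simpa [ContinuousLinearMap.mul_apply] using this
  -- key operator identity : W * T j * star W = ∑ i, S i * star (U j i)
  have key : ∀ j, W * T j * star W = ∑ i, S i * star (U j i) := by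
    intro j
    calc W * T j * star W
        = ∑ k, W * T k * star W * (if k = j then (1 : H →L[ℂ] H) else 0) := by
          simp [mul_ite]
      _ = ∑ k, W * T k * star W * (∑ i, U k i * star (U j i)) := by
          refine Finset.sum_congr rfl fun k _ => ?_
          rw [hUr k j]
      _ = ∑ k, ∑ i, W * T k * star W * (U k i * star (U j i)) := by
          refine Finset.sum_congr rfl fun k _ => ?_
          rw [Finset.mul_sum]
      _ = ∑ i, ∑ k, (W * T k * star W * U k i) * star (U j i) := by
          rw [Finset.sum_comm]
          refine Finset.sum_congr rfl fun i _ => Finset.sum_congr rfl fun k _ => ?_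
          exact (mul_assoc _ _ _).symm
      _ = ∑ i, S i * star (U j i) := by
          refine Finset.sum_congr rfl fun i _ => ?_
          rw [hST i, Finset.sum_mul]
  set M := ⨆ i, LinearMap.range ((S i : H →ₗ[ℂ] H)) with hM
  set N := ⨆ i, LinearMap.range ((T i : H →ₗ[ℂ] H)) with hN
  have hMN : M = Submodule.map (W : H →ₗ[ℂ] H) N := by
    apply le_antisymm
    · refine iSup_le fun i => ?_
      rintro _ ⟨x, rfl⟩
      have : (S i : H →ₗ[ℂ] H) x = ∑ j, W ((T j) ((star W) ((U j i) x))) := by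
        rw [hST i]
        simp [ContinuousLinearMap.mul_apply]
      rw [this]
      refine Submodule.sum_mem _ fun j _ => ?_
      exact Submodule.mem_map_of_mem (Submodule.mem_iSup_of_mem j ⟨_, rfl⟩)
    · rw [Submodule.map_iSup]
      refine iSup_le fun j => ?_
      rintro _ ⟨_, ⟨x, rfl⟩, rfl⟩
      have h1 : W ((T j) x) = (W * T j * star W) (W x) := by
        simp [ContinuousLinearMap.mul_apply, hWW]
      have h2 : (W * T j * star W) (W x) = ∑ i, S i ((star (U j i)) (W x)) := by
        rw [key j]
        simp [ContinuousLinearMap.mul_apply]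
      simp only [ContinuousLinearMap.coe_coe]
      rw [h1, h2]
      exact Submodule.sum_mem _ fun i _ => Submodule.mem_iSup_of_mem i ⟨_, rfl⟩
  have horth : Mᗮ = Submodule.map (W : H →ₗ[ℂ] H) Nᗮ := by
    ext x
    constructor
    · intro hx
      refine ⟨star W x, ?_, hWW' x⟩
      show (star W) x ∈ Nᗮ
      rw [Submodule.mem_orthogonal]
      intro y hy
      have h0 : W y ∈ M := hMN ▸ Submodule.mem_map_of_mem hy
      have := (Submodule.mem_orthogonal _ _).mp hx (W y) h0
      calc ⟪y, (star W) x⟫ = ⟪W y, x⟫ := by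
            rw [ContinuousLinearMap.star_eq_adjoint, ContinuousLinearMap.adjoint_inner_right]
        _ = 0 := this
    · rintro ⟨z, hz, rfl⟩
      rw [Submodule.mem_orthogonal]
      intro u hu
      rw [hMN] at hu
      obtain ⟨y, hy, rfl⟩ := hu
      calc ⟪(W : H →ₗ[ℂ] H) y, (W : H →ₗ[ℂ] H) z⟫ = ⟪y, (star W) (W z)⟫ := by
            rw [ContinuousLinearMap.star_eq_adjoint, ContinuousLinearMap.adjoint_inner_right]
            rfl
        _ = ⟪y, z⟫ := by rw [hWW z]
        _ = 0 := (Submodule.mem_orthogonal _ _).mp hz y hy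
  have hinj : Function.Injective (W : H →ₗ[ℂ] H) := by
    intro a b hab
    have h3 := congrArg (⇑(star W)) hab
    simpa [ContinuousLinearMap.coe_coe, hWW] using h3
  rw [toeplitzMultiplicity, toeplitzMultiplicity, ← hM, ← hN, horth]
  exact ((Submodule.equivMapOfInjective _ hinj Nᗮ).rank_eq).symm
end

section
/- Let H be a complex Hilbert space, A a unital C*-subalgebra of B(H), let S be a Toeplitz family of size n and T a Toeplitz family of size m on H (n, m finite), and assume that for every a ∈ A both α(a) := Σᵢ Sᵢ a Sᵢ* and β(a) := Σⱼ Tⱼ a Tⱼ* belong to A (so α and β are *-endomorphisms of A). If the commutant A' has Invariant Basis Number, then the following are equivalent: (1) α(a) = β(a) for all a ∈ A; (2) n = m and S and T are A'-free equivalent. -/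
variable {H : Type*} [NormedAddCommGroup H] [InnerProductSpace ℂ H] [CompleteSpace H]

/-- `A`-free equivalence of two families of operators. -/
def FreeEquiv {n : ℕ} (A : Set (H →L[ℂ] H)) (S T : Fin n → (H →L[ℂ] H)) : Prop :=
  ∃ U : Fin n → Fin n → (H →L[ℂ] H), IsUnitaryMatrixIn A U ∧ ∀ i, S i = ∑ j, T j * U j i

/-- The commutant `A' ⊆ B(H)` of a set of operators `A ⊆ B(H)`. -/
def Commutant (A : Set (H →L[ℂ] H)) : Set (H →L[ℂ] H) :=
  {x | ∀ a ∈ A, x * a = a * x}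

/-- A subalgebra `B ⊆ B(H)` has Invariant Basis Number if any rectangular `k × m` matrix `V`
with entries in `B` satisfying `V*V = Iₘ` and `VV* = I_k` forces `k = m`. -/
def HasIBN (B : Set (H →L[ℂ] H)) : Prop :=
  ∀ (k m : ℕ) (V : Fin k → Fin m → (H →L[ℂ] H)),
    (∀ i j, V i j ∈ B) →
    (∀ j l, ∑ i, star (V i j) * V i l = if j = l then (1 : H →L[ℂ] H) else 0) →
    (∀ j l, ∑ i, V j i * star (V l i) = if j = l then (1 : H →L[ℂ] H) else 0) →
    k = m

lemma aux_star_mul_sum {n : ℕ} {S : Fin n → (H →L[ℂ] H)} (hS : IsToeplitzFamily S)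
    (a : H →L[ℂ] H) (i : Fin n) :
    star (S i) * (∑ j, S j * a * star (S j)) = a * star (S i) := by
  rw [Finset.mul_sum]
  have : ∀ j ∈ Finset.univ, star (S i) * (S j * a * star (S j)) =
      (if i = j then a * star (S j) else 0) := by
    intro j _
    rw [← mul_assoc, ← mul_assoc, hS i j]
    split <;> simp
  rw [Finset.sum_congr rfl this, Finset.sum_ite_eq]
  simp

lemma aux_sum_mul {n : ℕ} {S : Fin n → (H →L[ℂ] H)} (hS : IsToeplitzFamily S)
    (a : H →L[ℂ] H) (i : Fin n) :
    (∑ j, S j * a * star (S j)) * S i = S i * a := by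
  rw [Finset.sum_mul]
  have : ∀ j ∈ Finset.univ, S j * a * star (S j) * S i =
      (if j = i then S j * a else 0) := by
    intro j _
    rw [mul_assoc, hS j i]
    split <;> simp
  rw [Finset.sum_congr rfl this, Finset.sum_ite_eq']
  simp

lemma aux_sandwich {k : ℕ} (Y : Fin k → (H →L[ℂ] H)) (x z : H →L[ℂ] H) :
    ∑ j, (x * Y j) * (star (Y j) * z) = x * (∑ j, Y j * star (Y j)) * z := by
  simp only [Finset.mul_sum, Finset.sum_mul]
  exact Finset.sum_congr rfl fun j _ => by simp [mul_assoc]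

lemma aux_proj_mul {n : ℕ} {S : Fin n → (H →L[ℂ] H)} (hS : IsToeplitzFamily S)
    (i : Fin n) : (∑ j, S j * star (S j)) * S i = S i := by
  have := aux_sum_mul hS 1 i
  simpa using this

lemma aux_star_proj {n : ℕ} {S : Fin n → (H →L[ℂ] H)} (hS : IsToeplitzFamily S)
    (i : Fin n) : star (S i) * (∑ j, S j * star (S j)) = star (S i) := by
  have := aux_star_mul_sum hS 1 i
  simpa using this

/-- If the endomorphisms `α(a) = Σᵢ Sᵢ a Sᵢ*` and `β(a) = Σⱼ Tⱼ a Tⱼ*` of `A`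
are induced by Toeplitz families and `A'` has IBN, then `α = β` iff `n = m` and `S`, `T`
are `A'`-free equivalent. -/
theorem endo_eq_iff_freeEquiv (A : StarSubalgebra ℂ (H →L[ℂ] H))
    (hA : IsClosed (A : Set (H →L[ℂ] H))) (n m : ℕ)
    (S : Fin n → (H →L[ℂ] H)) (T : Fin m → (H →L[ℂ] H))
    (hS : IsToeplitzFamily S) (hT : IsToeplitzFamily T)
    (hSA : ∀ a ∈ A, ∑ i, S i * a * star (S i) ∈ A)
    (hTA : ∀ a ∈ A, ∑ j, T j * a * star (T j) ∈ A)
    (hIBN : HasIBN (Commutant (A : Set (H →L[ℂ] H)))) :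
    (∀ a ∈ A, ∑ i, S i * a * star (S i) = ∑ j, T j * a * star (T j)) ↔
      ∃ h : n = m, FreeEquiv (Commutant (A : Set (H →L[ℂ] H))) S
        (fun i => T (Fin.cast h i)) := by
  constructor
  · intro hab
    -- equality of range projections
    have hP : (∑ i, S i * star (S i)) = ∑ j, T j * star (T j) := by
      have := hab 1 (one_mem A)
      simpa using this
    -- commutant membership of the matrix entries
    have hcomm : ∀ (j : Fin m) (i : Fin n),
        star (T j) * S i ∈ Commutant (A : Set (H →L[ℂ] H)) := by
      intro j i a ha
      calc star (T j) * S i * a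
          = star (T j) * ((∑ k, S k * a * star (S k)) * S i) := by
            rw [aux_sum_mul hS a i, mul_assoc]
        _ = star (T j) * (∑ k, T k * a * star (T k)) * S i := by
            rw [hab a ha, mul_assoc]
        _ = a * (star (T j) * S i) := by
            rw [aux_star_mul_sum hT a j, mul_assoc]
    -- the rectangular unitary conditions
    have cond1 : ∀ (i k : Fin n),
        ∑ j : Fin m, star (star (T j) * S i) * (star (T j) * S k) =
          if i = k then (1 : H →L[ℂ] H) else 0 := by
      intro i k
      have : ∀ j ∈ Finset.univ, star (star (T j) * S i) * (star (T j) * S k) =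
          (star (S i) * T j) * (star (T j) * S k) := by
        intro j _; rw [star_mul, star_star]
      rw [Finset.sum_congr rfl this, aux_sandwich, ← hP, mul_assoc,
        aux_proj_mul hS k]
      exact hS i k
    have cond2 : ∀ (j l : Fin m),
        ∑ i : Fin n, (star (T j) * S i) * star (star (T l) * S i) =
          if j = l then (1 : H →L[ℂ] H) else 0 := by
      intro j l
      have : ∀ i ∈ Finset.univ, (star (T j) * S i) * star (star (T l) * S i) =
          (star (T j) * S i) * (star (S i) * T l) := by
        intro i _; rw [star_mul, star_star]
      rw [Finset.sum_congr rfl this, aux_sandwich, hP, aux_star_proj hT j]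
      exact hT j l
    have hnm : m = n :=
      hIBN m n (fun j i => star (T j) * S i) hcomm cond1 cond2
    refine ⟨hnm.symm, ?_⟩
    set T' : Fin n → (H →L[ℂ] H) := fun i => T (Fin.cast hnm.symm i) with hT'def
    have hT' : IsToeplitzFamily T' := by
      intro i j
      rw [show (if i = j then (1 : H →L[ℂ] H) else 0) =
          if Fin.cast hnm.symm i = Fin.cast hnm.symm j then 1 else 0 by
        congr 1
        simp [Fin.ext_iff]]
      exact hT _ _
    have hPT' : (∑ j, T' j * star (T' j)) = ∑ j, T j * star (T j) :=
      Fintype.sum_equiv (finCongr hnm.symm) _ _ (fun j => rfl)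
    refine ⟨fun j i => star (T' j) * S i, ⟨fun j i => hcomm _ i, ?_, ?_⟩, ?_⟩
    · intro j k
      have : ∀ l ∈ Finset.univ, star (star (T' l) * S j) * (star (T' l) * S k) =
          (star (S j) * T' l) * (star (T' l) * S k) := by
        intro l _; rw [star_mul, star_star]
      rw [Finset.sum_congr rfl this, aux_sandwich, hPT', ← hP, mul_assoc,
        aux_proj_mul hS k]
      exact hS j k
    · intro j k
      have : ∀ i ∈ Finset.univ, (star (T' j) * S i) * star (star (T' k) * S i) =
          (star (T' j) * S i) * (star (S i) * T' k) := by
        intro i _; rw [star_mul, star_star]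
      rw [Finset.sum_congr rfl this, aux_sandwich, hP, ← hPT',
        aux_star_proj hT' j]
      exact hT' j k
    · intro i
      have : ∀ j ∈ Finset.univ, T' j * (star (T' j) * S i) =
          (1 * T' j) * (star (T' j) * S i) := by intro j _; rw [one_mul]
      rw [show (∑ j, T' j * (star (T' j) * S i)) =
          ∑ j, (1 * T' j) * (star (T' j) * S i) from Finset.sum_congr rfl this,
        aux_sandwich, hPT', ← hP, one_mul, aux_proj_mul hS i]
  · rintro ⟨h, U, ⟨hUA, hU1, hU2⟩, hSU⟩
    subst h
    simp only [Fin.cast_refl, id] at hSU hUA hU1 hU2 ⊢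
    intro a ha
    calc ∑ i, S i * a * star (S i)
        = ∑ i, ∑ j, ∑ k, T j * a * (U j i * star (U k i) * star (T k)) := by
          refine Finset.sum_congr rfl fun i _ => ?_
          rw [hSU i, star_sum]
          simp only [star_mul, Finset.sum_mul, Finset.mul_sum]
          rw [Finset.sum_comm]
          refine Finset.sum_congr rfl fun j _ => Finset.sum_congr rfl fun k _ => ?_
          rw [mul_assoc (T j) (U j i) a, hUA j i a ha]
          simp only [mul_assoc]
      _ = ∑ j, ∑ k, T j * a * ((∑ i, U j i * star (U k i)) * star (T k)) := by
          conv_rhs => simp only [Finset.sum_mul, Finset.mul_sum]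
          rw [Finset.sum_comm]
          exact Finset.sum_congr rfl fun j _ => Finset.sum_comm
      _ = ∑ j, T j * a * star (T j) := by
          simp only [hU2, ite_mul, one_mul, zero_mul, mul_ite, mul_zero,
            Finset.sum_ite_eq, Finset.mem_univ, if_true]
end
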